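/- arXiv:1805.04923 — 4 statements merged into one kernel-verified Lean document; each statement's English description precedes it below -/
import Mathlib

section
/- Let V be a real inner product space, a, b, a', b' ∈ V and γ ≥ 0 such that all six pairwise distances among {a, b, a', b'} are at most γ, and γ ≤ ‖a - b‖ + ‖a' - b'‖. Then, setting m = (a+b)/2 and m' = (a'+b')/2, we have ‖m - m'‖ ≤ √(7/8) · γ. -/
theorem stmt_2 {V : Type*} [NormedAddCommGroup V] [InnerProductSpace ℝ V]
    (a b a' b' : V) (γ : ℝ) (hγ : 0 ≤ γ)
    (h1 : ‖a - b‖ ≤ γ) (h2 : ‖a - a'‖ ≤ γ) (h3 : ‖a - b'‖ ≤ γ)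
    (h4 : ‖b - a'‖ ≤ γ) (h5 : ‖b - b'‖ ≤ γ) (h6 : ‖a' - b'‖ ≤ γ)
    (hlow : γ ≤ ‖a - b‖ + ‖a' - b'‖)
    (m m' : V) (hm : m = ((1/2 : ℝ) • (a + b))) (hm' : m' = ((1/2 : ℝ) • (a' + b'))) :
    ‖m - m'‖ ≤ Real.sqrt (7 / 8) * γ := by
  have key : 4 * ‖m - m'‖ ^ 2 + ‖a - b‖ ^ 2 + ‖a' - b'‖ ^ 2
      = ‖a - a'‖ ^ 2 + ‖b - b'‖ ^ 2 + ‖a - b'‖ ^ 2 + ‖b - a'‖ ^ 2 := by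
    subst hm hm'
    simp only [← real_inner_self_eq_norm_sq]
    simp only [inner_sub_left, inner_sub_right, inner_add_left, inner_add_right,
      real_inner_smul_left, real_inner_smul_right]
    rw [real_inner_comm b a, real_inner_comm a' a, real_inner_comm b' a,
      real_inner_comm a' b, real_inner_comm b' b, real_inner_comm b' a']
    ring
  have hsq : ‖m - m'‖ ^ 2 ≤ 7 / 8 * γ ^ 2 := by
    nlinarith [mul_self_le_mul_self (norm_nonneg (a - a')) h2,
      mul_self_le_mul_self (norm_nonneg (a - b')) h3,
      mul_self_le_mul_self (norm_nonneg (b - a')) h4,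
      mul_self_le_mul_self (norm_nonneg (b - b')) h5,
      mul_self_le_mul_self hγ hlow,
      sq_nonneg (‖a - b‖ - ‖a' - b'‖)]
  have := Real.sqrt_le_sqrt hsq
  rwa [Real.sqrt_sq (norm_nonneg _), Real.sqrt_mul (by norm_num : (0:ℝ) ≤ 7/8),
    Real.sqrt_sq hγ] at this
end

section
/- Let V be a real inner product space, a, b, a', b' ∈ V and γ ≥ 0 such that all six pairwise distances among {a, b, a', b'} are at most γ, and γ ≤ 2‖a - b‖ + 2‖a' - b'‖. Then, setting m = (a+b)/2 and m' = (a'+b')/2, we have ‖m - m'‖ ≤ √(31/32) · γ. -/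
theorem stmt_3 {V : Type*} [NormedAddCommGroup V] [InnerProductSpace ℝ V]
    (a b a' b' : V) (γ : ℝ) (hγ : 0 ≤ γ)
    (h1 : ‖a - b‖ ≤ γ) (h2 : ‖a - a'‖ ≤ γ) (h3 : ‖a - b'‖ ≤ γ)
    (h4 : ‖b - a'‖ ≤ γ) (h5 : ‖b - b'‖ ≤ γ) (h6 : ‖a' - b'‖ ≤ γ)
    (hlow : γ ≤ 2 * ‖a - b‖ + 2 * ‖a' - b'‖)
    (m m' : V) (hm : m = ((1/2 : ℝ) • (a + b))) (hm' : m' = ((1/2 : ℝ) • (a' + b'))) :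
    ‖m - m'‖ ≤ Real.sqrt (31 / 32) * γ := by
  have key : 8 * ‖m - m'‖ ^ 2 =
      2 * (‖a - a'‖ ^ 2 + ‖b - b'‖ ^ 2 + ‖a - b'‖ ^ 2 + ‖b - a'‖ ^ 2)
        - 2 * (‖a - b‖ ^ 2 + ‖a' - b'‖ ^ 2) := by
    simp only [hm, hm', ← real_inner_self_eq_norm_sq]
    simp only [← smul_sub, ← smul_add, ← sub_smul, inner_smul_left, inner_smul_right,
      inner_sub_left, inner_sub_right, inner_add_left, inner_add_right,
      RCLike.conj_to_real]
    rw [real_inner_comm b a, real_inner_comm a' a, real_inner_comm b' a,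
      real_inner_comm a' b, real_inner_comm b' b, real_inner_comm b' a']
    ring
  have hsq : ‖m - m'‖ ^ 2 ≤ 31 / 32 * γ ^ 2 := by
    nlinarith [sq_nonneg (‖a - b‖ - ‖a' - b'‖), norm_nonneg (a - b), norm_nonneg (a' - b'),
      norm_nonneg (a - a'), norm_nonneg (b - b'), norm_nonneg (a - b'), norm_nonneg (b - a')]
  have h31 : (0:ℝ) ≤ 31 / 32 := by norm_num
  calc ‖m - m'‖ = Real.sqrt (‖m - m'‖ ^ 2) := by
        rw [Real.sqrt_sq (norm_nonneg _)]
    _ ≤ Real.sqrt (31 / 32 * γ ^ 2) := Real.sqrt_le_sqrt hsq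
    _ = Real.sqrt (31 / 32) * γ := by
        rw [Real.sqrt_mul h31, Real.sqrt_sq hγ]
end

section
/- Let V be a real inner product space, a, b, a', b' ∈ V with midpoints m = (a+b)/2, m' = (a'+b')/2, and γ ≥ 0 with diam({a,b,a',b'}) ≤ γ, ‖m - a'‖² ≤ γ² - (1/4)‖a - b‖², and ‖m - b'‖² ≤ γ² - (1/4)‖a - b‖². Then ‖m - m'‖² ≤ γ² - (1/4)(‖a - b‖² + ‖a' - b'‖²). -/
theorem stmt_4 {V : Type*} [NormedAddCommGroup V] [InnerProductSpace ℝ V]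
    (a b a' b' : V) (m m' : V) (hm : m = ((1/2 : ℝ) • (a + b))) (hm' : m' = ((1/2 : ℝ) • (a' + b')))
    (γ : ℝ) (hγ : 0 ≤ γ) (hdiam : Metric.diam ({a, b, a', b'} : Set V) ≤ γ)
    (h1 : ‖m - a'‖ ^ 2 ≤ γ ^ 2 - (1 / 4) * ‖a - b‖ ^ 2)
    (h2 : ‖m - b'‖ ^ 2 ≤ γ ^ 2 - (1 / 4) * ‖a - b‖ ^ 2) :
    ‖m - m'‖ ^ 2 ≤ γ ^ 2 - (1 / 4) * (‖a - b‖ ^ 2 + ‖a' - b'‖ ^ 2) := by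
  have key := parallelogram_law_with_norm ℝ (m - a') (m - b')
  have e1 : (m - a') + (m - b') = (2 : ℝ) • (m - m') := by
    rw [hm']; module
  have e2 : (m - a') - (m - b') = b' - a' := by abel
  rw [e1, e2, norm_smul] at key
  have hn : ‖b' - a'‖ = ‖a' - b'‖ := by rw [norm_sub_rev]
  have h4 : 4 * ‖m - m'‖ ^ 2 + ‖a' - b'‖ ^ 2 = 2 * ‖m - a'‖ ^ 2 + 2 * ‖m - b'‖ ^ 2 := by
    rw [show ‖(2:ℝ)‖ = 2 from by norm_num, hn] at key
    nlinarith [key]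
  nlinarith [h1, h2, h4]
end

section
/- Let V be a real inner product space, γ ≥ 0, and a, b, a', b' ∈ V such that diam({a,b,a',b'}) ≤ γ. Then ‖(a+b)/2 - (a'+b')/2‖² ≤ γ² - (1/4)(‖a-b‖² + ‖a'-b'‖²). -/
theorem stmt_15 {V : Type*} [NormedAddCommGroup V] [InnerProductSpace ℝ V]
    (γ : ℝ) (hγ : 0 ≤ γ) (a b a' b' : V)
    (h1 : ‖a - b‖ ≤ γ) (h2 : ‖a - a'‖ ≤ γ) (h3 : ‖a - b'‖ ≤ γ)
    (h4 : ‖b - a'‖ ≤ γ) (h5 : ‖b - b'‖ ≤ γ) (h6 : ‖a' - b'‖ ≤ γ) :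
    ‖((1/2 : ℝ) • (a + b)) - ((1/2 : ℝ) • (a' + b'))‖ ^ 2 ≤
      γ ^ 2 - (1 / 4) * (‖a - b‖ ^ 2 + ‖a' - b'‖ ^ 2) := by
  have key : ‖((1/2 : ℝ) • (a + b)) - ((1/2 : ℝ) • (a' + b'))‖ ^ 2 =
      (1/4) * (‖a - a'‖ ^ 2 + ‖b - b'‖ ^ 2 + ‖a - b'‖ ^ 2 + ‖b - a'‖ ^ 2)
      - (1/4) * (‖a - b‖ ^ 2 + ‖a' - b'‖ ^ 2) := by
    simp only [← real_inner_self_eq_norm_sq]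
    simp only [inner_sub_left, inner_sub_right, inner_add_left, inner_add_right,
      real_inner_smul_left, real_inner_smul_right]
    rw [real_inner_comm b a, real_inner_comm a' a, real_inner_comm b' a,
      real_inner_comm a' b, real_inner_comm b' b, real_inner_comm b' a']
    ring
  have p2 := pow_le_pow_left₀ (norm_nonneg (a - a')) h2 2
  have p3 := pow_le_pow_left₀ (norm_nonneg (a - b')) h3 2
  have p4 := pow_le_pow_left₀ (norm_nonneg (b - a')) h4 2
  have p5 := pow_le_pow_left₀ (norm_nonneg (b - b')) h5 2
  linarith
end
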